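/- Let α be a positive integer and β a nonnegative integer with β < α, and let {a_m}_{m≥1} be an arbitrary sequence of complex numbers. For every positive integer n, A(a,α,β;n) = ∑_{k=1}^{n} B(a,α,β;k) · p̄(n−k). -/

import Mathlib

/-- An overpartition of `n`: a pair consisting of a multiset of overlined parts (pairwise
distinct) and a multiset of non-overlined parts, all parts positive, with total sum `n`. -/
structure Overpartition (n : ℕ) where
  overlined : Multiset ℕ
  nonoverlined : Multiset ℕ
  overlined_nodup : overlined.Nodup
  overlined_pos : ∀ i ∈ overlined, 0 < i
  nonoverlined_pos : ∀ i ∈ nonoverlined, 0 < i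
  parts_sum : overlined.sum + nonoverlined.sum = n

/-- There are only finitely many overpartitions of `n`. -/
instance (n : ℕ) : Finite (Overpartition n) := by
  classical
  set big : Multiset ℕ := n • ((Multiset.range (n + 1))) with hbig
  have key : ∀ (m : Multiset ℕ), (∀ i ∈ m, 0 < i) → m.sum ≤ n → m ≤ big := by
    intro m hpos hsum
    rw [Multiset.le_iff_count]
    intro a
    rw [hbig, Multiset.count_nsmul]
    by_cases ha : a ∈ m
    · have ha1 : 0 < a := hpos a ha
      have hale : a ≤ m.sum := Multiset.le_sum_of_mem ha
      have hcard : m.card ≤ m.sum := by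
        have := Multiset.card_nsmul_le_sum (s := m) (a := 1) (fun i hi => hpos i hi)
        simpa using this
      have hcnt : m.count a ≤ m.card := Multiset.count_le_card a m
      have haa : a ∈ Multiset.range (n + 1) := Multiset.mem_range.2 (by omega)
      have h1 : Multiset.count a (Multiset.range (n + 1)) = 1 :=
        Multiset.count_eq_one_of_mem (Multiset.nodup_range _) haa
      rw [h1]
      omega
    · simp [Multiset.count_eq_zero.2 ha]
  have hinj : Function.Injective (fun o : Overpartition n =>
      ((⟨o.overlined, Multiset.mem_powerset.2
          (key _ o.overlined_pos (by have := o.parts_sum; omega))⟩,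
        ⟨o.nonoverlined, Multiset.mem_powerset.2
          (key _ o.nonoverlined_pos (by have := o.parts_sum; omega))⟩) :
        {m // m ∈ big.powerset} × {m // m ∈ big.powerset})) := by
    intro a b h
    cases a; cases b
    simp_all
  exact Finite.of_injective _ hinj

/-- `S k n`: the total number of non-overlined parts equal to `k`, counted with
multiplicity, in all the overpartitions of `n`. -/
noncomputable def S (k n : ℕ) : ℕ := ∑ᶠ o : Overpartition n, o.nonoverlined.count k

/-- `pbar n`: the number of overpartitions of `n` (`pbar 0 = 1`). -/
noncomputable def pbar (n : ℕ) : ℕ := Nat.card (Overpartition n)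

/-- The multiset of all parts (overlined and non-overlined) of an overpartition. -/
def Overpartition.parts {n : ℕ} (o : Overpartition n) : Multiset ℕ :=
  o.overlined + o.nonoverlined

/-- `Mbar k n`: the number of overpartitions of `n` in which the first (i.e. largest) part
larger than `k` appears at least `k + 1` times. -/
noncomputable def Mbar (k n : ℕ) : ℕ :=
  Nat.card {o : Overpartition n // ∃ s ∈ o.parts, k < s ∧
    (∀ t ∈ o.parts, k < t → t ≤ s) ∧ k + 1 ≤ o.parts.count s}

/-- `A a α β n = ∑_{k ≥ 1} S(αk - β, n) * a k`. -/
noncomputable def A (a : ℕ → ℂ) (α β n : ℕ) : ℂ :=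
  ∑ᶠ k ∈ Set.Ici 1, (S (α * k - β) n : ℂ) * a k

/-- `A` extended to integer arguments: terms with negative argument are zero. -/
noncomputable def Az (a : ℕ → ℂ) (α β : ℕ) (m : ℤ) : ℂ :=
  if 0 ≤ m then A a α β m.toNat else 0

/-- `B a α β n = ∑_{d ≥ 1, (αd - β) ∣ n} a d`. -/
noncomputable def B (a : ℕ → ℂ) (α β n : ℕ) : ℂ :=
  ∑ᶠ d ∈ {d : ℕ | 1 ≤ d ∧ (α * d - β) ∣ n}, a d

/-!
Deleting `j` non-overlined parts equal to `m` identifies the overpartitions of `n` having at least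
`j` such parts with the overpartitions of `n - j m`; summing over `j ≥ 1` gives
`S(m, n) = ∑_{m ∣ k, 1 ≤ k ≤ n} p̄(n - k)`. With `m = αd - β ≥ d` only `d ≤ n` contribute to `A`,
and exchanging the sums over `d` and `k` turns `∑_d a_d S(αd - β, n)` into `∑_k B(k) p̄(n - k)`.
-/

open Finset

@[ext] lemma Overpartition.ext {n : ℕ} {o₁ o₂ : Overpartition n}
    (h₁ : o₁.overlined = o₂.overlined) (h₂ : o₁.nonoverlined = o₂.nonoverlined) : o₁ = o₂ := by
  cases o₁; cases o₂; simp_all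

lemma Multiset.count_mul_le_sum (s : Multiset ℕ) (m : ℕ) : s.count m * m ≤ s.sum := by
  obtain ⟨t, ht⟩ := Multiset.le_iff_exists_add.mp
    (Multiset.le_count_iff_replicate_le.mp le_rfl : Multiset.replicate (s.count m) m ≤ s)
  calc s.count m * m = (Multiset.replicate (s.count m) m).sum := by
        rw [Multiset.sum_replicate, smul_eq_mul]
    _ ≤ (Multiset.replicate (s.count m) m + t).sum := by
        rw [Multiset.sum_add]; exact Nat.le_add_right _ _
    _ = s.sum := congrArg _ ht.symm

namespace Overpartition

variable {n : ℕ}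

lemma count_nonoverlined_mul_le (o : Overpartition n) (m : ℕ) :
    o.nonoverlined.count m * m ≤ n :=
  (o.nonoverlined.count_mul_le_sum m).trans (by have := o.parts_sum; omega)

def eraseReplicateEquiv {m j : ℕ} (hm : 0 < m) (hjm : j * m ≤ n) :
    {o : Overpartition n // j ≤ o.nonoverlined.count m} ≃ Overpartition (n - j * m) where
  toFun o :=
    { overlined := o.1.overlined
      nonoverlined := o.1.nonoverlined - Multiset.replicate j m
      overlined_nodup := o.1.overlined_nodup
      overlined_pos := o.1.overlined_pos
      nonoverlined_pos := fun i hi => o.1.nonoverlined_pos i (Multiset.mem_of_le tsub_le_self hi)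
      parts_sum := by
        have h := congrArg Multiset.sum
          (tsub_add_cancel_of_le (Multiset.le_count_iff_replicate_le.mp o.2))
        rw [Multiset.sum_add, Multiset.sum_replicate, smul_eq_mul] at h
        have := o.1.parts_sum
        omega }
  invFun o :=
    ⟨{ overlined := o.overlined
       nonoverlined := o.nonoverlined + Multiset.replicate j m
       overlined_nodup := o.overlined_nodup
       overlined_pos := o.overlined_pos
       nonoverlined_pos := fun i hi => by
         rcases Multiset.mem_add.mp hi with h | h
         · exact o.nonoverlined_pos i h
         · rwa [Multiset.eq_of_mem_replicate h]
       parts_sum := by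
         have := o.parts_sum
         rw [Multiset.sum_add, Multiset.sum_replicate, smul_eq_mul]
         omega },
     by simp [Multiset.count_add]⟩
  left_inv o := by
    ext1
    ext <;> simp [tsub_add_cancel_of_le (Multiset.le_count_iff_replicate_le.mp o.2)]
  right_inv o := by
    ext <;> simp

lemma card_le_count_nonoverlined {m j : ℕ} (hm : 0 < m) (hjm : j * m ≤ n) :
    Nat.card {o : Overpartition n // j ≤ o.nonoverlined.count m} = pbar (n - j * m) :=
  Nat.card_congr (eraseReplicateEquiv hm hjm)

end Overpartition

lemma S_eq_sum_Icc {m : ℕ} (hm : 0 < m) (n : ℕ) :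
    S m n = ∑ j ∈ Icc 1 (n / m), pbar (n - j * m) := by
  classical
  have : Fintype (Overpartition n) := Fintype.ofFinite _
  have count_eq (o : Overpartition n) : o.nonoverlined.count m =
      ∑ j ∈ Icc 1 (n / m), if j ≤ o.nonoverlined.count m then 1 else 0 := by
    have hc := (Nat.le_div_iff_mul_le hm).2 (o.count_nonoverlined_mul_le m)
    have h_filter : {j ∈ Icc 1 (n / m) | j ≤ o.nonoverlined.count m} =
        Icc 1 (o.nonoverlined.count m) := by
      ext j
      simp only [mem_filter, mem_Icc]
      omega
    rw [sum_boole, Nat.cast_id, h_filter, Nat.card_Icc, Nat.add_sub_cancel]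
  calc S m n = ∑ o : Overpartition n, ∑ j ∈ Icc 1 (n / m),
        if j ≤ o.nonoverlined.count m then 1 else 0 := by
        rw [S, finsum_eq_sum_of_fintype]
        exact sum_congr rfl fun o _ => count_eq o
    _ = ∑ j ∈ Icc 1 (n / m), Nat.card {o : Overpartition n // j ≤ o.nonoverlined.count m} := by
        rw [sum_comm]
        refine sum_congr rfl fun j _ => ?_
        rw [Nat.card_eq_fintype_card, Fintype.card_subtype, sum_boole]
        simp
    _ = ∑ j ∈ Icc 1 (n / m), pbar (n - j * m) :=
        sum_congr rfl fun j hj => Overpartition.card_le_count_nonoverlined hm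
          ((Nat.le_div_iff_mul_le hm).1 (mem_Icc.1 hj).2)

lemma Nat.Icc_filter_dvd_eq_map {m : ℕ} (hm : 0 < m) (n : ℕ) :
    {k ∈ Icc 1 n | m ∣ k} = (Icc 1 (n / m)).map ⟨(· * m), mul_left_injective₀ hm.ne'⟩ := by
  ext k
  simp only [mem_filter, mem_Icc, mem_map, Function.Embedding.coeFn_mk,
    Nat.le_div_iff_mul_le hm]
  constructor
  · rintro ⟨⟨hk, hkn⟩, j, rfl⟩
    exact ⟨j, ⟨Nat.pos_of_mul_pos_left hk, mul_comm m j ▸ hkn⟩, mul_comm j m⟩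
  · rintro ⟨j, ⟨hj, hjn⟩, rfl⟩
    exact ⟨⟨Nat.mul_pos hj hm, hjn⟩, dvd_mul_left m j⟩

lemma S_eq_sum_filter_dvd {m : ℕ} (hm : 0 < m) (n : ℕ) :
    S m n = ∑ k ∈ Icc 1 n with m ∣ k, pbar (n - k) := by
  rw [S_eq_sum_Icc hm, Nat.Icc_filter_dvd_eq_map hm, sum_map]
  rfl

lemma S_eq_zero_of_lt {m n : ℕ} (hm : 0 < m) (h : n < m) : S m n = 0 := by
  simp [S_eq_sum_Icc hm, Nat.div_eq_of_lt h]

lemma Nat.le_mul_sub_of_lt {α β d : ℕ} (hβ : β < α) (hd : 1 ≤ d) : d ≤ α * d - β := by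
  have h₁ : (β + 1) * d ≤ α * d := Nat.mul_le_mul_right d hβ
  have h₂ : β ≤ β * d := Nat.le_mul_of_pos_right β hd
  rw [add_one_mul] at h₁
  omega

lemma Nat.mul_sub_pos_of_lt {α β d : ℕ} (hβ : β < α) (hd : 1 ≤ d) : 0 < α * d - β :=
  Nat.lt_of_lt_of_le hd (Nat.le_mul_sub_of_lt hβ hd)

lemma A_eq_sum_Icc {α β : ℕ} (hβ : β < α) (a : ℕ → ℂ) (n : ℕ) :
    A a α β n = ∑ d ∈ Icc 1 n, (S (α * d - β) n : ℂ) * a d := by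
  refine finsum_mem_eq_sum_of_subset _ ?_ fun d hd => (mem_Icc.1 (mem_coe.1 hd)).1
  rintro d ⟨hd, hS⟩
  have hd : 1 ≤ d := hd
  refine mem_coe.2 (mem_Icc.2 ⟨hd, not_lt.1 fun hnd => hS ?_⟩)
  change (S (α * d - β) n : ℂ) * a d = 0
  rw [S_eq_zero_of_lt (Nat.mul_sub_pos_of_lt hβ hd)
    (Nat.lt_of_lt_of_le hnd (Nat.le_mul_sub_of_lt hβ hd)), Nat.cast_zero, zero_mul]

lemma B_eq_sum_filter_dvd {α β k n : ℕ} (hβ : β < α) (a : ℕ → ℂ) (hk : k ∈ Icc 1 n) :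
    B a α β k = ∑ d ∈ Icc 1 n with α * d - β ∣ k, a d := by
  obtain ⟨hk, hkn⟩ := mem_Icc.1 hk
  refine finsum_mem_eq_sum_of_subset _ ?_ fun d hd => ?_
  · rintro d ⟨⟨hd, hdk⟩, -⟩
    exact mem_coe.2 (mem_filter.2 ⟨mem_Icc.2 ⟨hd,
      ((Nat.le_mul_sub_of_lt hβ hd).trans (Nat.le_of_dvd hk hdk)).trans hkn⟩, hdk⟩)
  · obtain ⟨hd, hdk⟩ := mem_filter.1 (mem_coe.1 hd)
    exact ⟨(mem_Icc.1 hd).1, hdk⟩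

theorem stmt5_general (α β : ℕ) (hβ : β < α) (a : ℕ → ℂ) (n : ℕ) :
    A a α β n = ∑ k ∈ Finset.Icc 1 n, B a α β k * (pbar (n - k) : ℂ) := by
  calc A a α β n = ∑ d ∈ Icc 1 n, ∑ k ∈ Icc 1 n with α * d - β ∣ k, a d * pbar (n - k) := by
        rw [A_eq_sum_Icc hβ]
        refine sum_congr rfl fun d hd => ?_
        rw [S_eq_sum_filter_dvd (Nat.mul_sub_pos_of_lt hβ (mem_Icc.1 hd).1), Nat.cast_sum,
          sum_mul]
        exact sum_congr rfl fun k _ => mul_comm _ _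
    _ = ∑ k ∈ Icc 1 n, ∑ d ∈ Icc 1 n with α * d - β ∣ k, a d * pbar (n - k) :=
        sum_comm' fun d k => by simp only [mem_filter]; tauto
    _ = ∑ k ∈ Icc 1 n, B a α β k * (pbar (n - k) : ℂ) :=
        sum_congr rfl fun k hk => by rw [B_eq_sum_filter_dvd hβ a hk, sum_mul]

theorem stmt5 (α β : ℕ) (hα : 0 < α) (hβ : β < α) (a : ℕ → ℂ) (n : ℕ) (hn : 0 < n) :
    A a α β n = ∑ k ∈ Finset.Icc 1 n, B a α β k * (pbar (n - k) : ℂ) :=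
  stmt5_general α β hβ a n
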